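/- arXiv:2008.11129 — 2 statements merged into one kernel-verified Lean document; each statement's English description precedes it below -/
import Mathlib

section
/- For d ≥ k, the element P = Σ_{ρ∈S_k} d^{c(ρ)} ρ is invertible in the group algebra Q[S_k]. -/
/-!
`P` is the permutation character of `S_k` acting on colourings `f : Fin k → Fin d` by
`ρ • f = f ∘ ρ⁻¹`: a colouring is fixed by `ρ` iff it is constant on the cycles of `ρ`, so there
are `d ^ c(ρ)` of them. For any action of a finite group `G` on a finite set `X`, let
`M_x(a, b) = ∑_{g • a = b} x_g` be the matrix of `x ∈ ℚ[G]` on `ℚ[X]`. Counting the pairs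
`(g, h)` with `g • a = h • a` gives `∑_{a,b} M_x(a, b)² = ∑_τ x_τ (x P)_τ`, so `x P = 0` forces
`M_x = 0`. If some `a` has trivial stabiliser (for `d ≥ k`, any injective colouring), then
`x_g = M_x(a, g • a)`, hence `x = 0`. A right non-zero-divisor of the finite-dimensional algebra
`ℚ[G]` is a unit.
-/

/-- The number of cycles of a permutation of `Fin k`, counting fixed points. -/
def cycles {k : ℕ} (σ : Equiv.Perm (Fin k)) : ℕ :=
  σ.cycleType.card + (k - σ.support.card)

open Finset MulAction

namespace MonoidAlgebra

variable (𝕜 G X : Type*) [Field 𝕜] [Group G] [Fintype G] [MulAction G X]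

noncomputable def permCharacterElement : MonoidAlgebra 𝕜 G :=
  ∑ g : G, (Nat.card (fixedBy X g) : 𝕜) • of 𝕜 G g

variable {𝕜 G X}

noncomputable def actionMatrix [DecidableEq X] (x : MonoidAlgebra 𝕜 G) (a b : X) : 𝕜 :=
  ∑ g : G, if g • a = b then x.coeff g else 0

theorem actionMatrix_smul_of_injective [DecidableEq X] (x : MonoidAlgebra 𝕜 G) {a : X}
    (ha : Function.Injective fun g : G => g • a) (g : G) :
    actionMatrix x a (g • a) = x.coeff g := by
  have hg : ∀ h : G, h • a = g • a ↔ h = g := fun h => ha.eq_iff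
  classical
  simp only [actionMatrix, hg, sum_ite_eq', mem_univ, if_true]

theorem coeff_mul_permCharacterElement (x : MonoidAlgebra 𝕜 G) (τ : G) :
    (x * permCharacterElement 𝕜 G X).coeff τ =
      ∑ g : G, x.coeff (τ * g⁻¹) * Nat.card (fixedBy X g) := by
  simp only [permCharacterElement, mul_sum, coeff_sum, sum_apply', of_apply, smul_single',
    mul_one, coeff_mul_single_apply]

theorem sum_coeff_mul_coeff_mul_permCharacterElement (x : MonoidAlgebra 𝕜 G) :
    ∑ τ : G, x.coeff τ * (x * permCharacterElement 𝕜 G X).coeff τ =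
      ∑ g : G, ∑ h : G, x.coeff g * x.coeff h * Nat.card (fixedBy X (h⁻¹ * g)) := by
  refine sum_congr rfl fun τ _ => ?_
  rw [coeff_mul_permCharacterElement, mul_sum]
  refine Fintype.sum_equiv ((Equiv.inv G).trans (Equiv.mulLeft τ)) _ _ fun g => ?_
  simp only [Equiv.trans_apply, Equiv.inv_apply, Equiv.coe_mulLeft, mul_inv_rev, inv_inv,
    mul_assoc, inv_mul_cancel, mul_one]

variable [Fintype X]

theorem sum_sq_actionMatrix [DecidableEq X] (x : MonoidAlgebra 𝕜 G) :
    ∑ a : X, ∑ b : X, actionMatrix x a b ^ 2 =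
      ∑ g : G, ∑ h : G, x.coeff g * x.coeff h * Nat.card (fixedBy X (h⁻¹ * g)) := by
  have sum_b : ∀ (a : X) (g h : G), ∑ b : X, (if g • a = b then x.coeff g else 0) *
      (if h • a = b then x.coeff h else 0) =
        if g • a = h • a then x.coeff g * x.coeff h else 0 := by
    intro a g h
    simp only [ite_mul, zero_mul, mul_ite, mul_zero, sum_ite_eq, mem_univ, if_true]
  have sum_a : ∀ g h : G, ∑ a : X, (if g • a = h • a then x.coeff g * x.coeff h else 0) =
      x.coeff g * x.coeff h * Nat.card (fixedBy X (h⁻¹ * g)) := by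
    intro g h
    have hfix : Nat.card (fixedBy X (h⁻¹ * g)) = #{a : X | g • a = h • a} := by
      rw [← Fintype.card_subtype, ← Nat.card_eq_fintype_card]
      exact Nat.card_congr (Equiv.subtypeEquivRight fun a => by
        rw [mem_fixedBy, mul_smul, inv_smul_eq_iff])
    rw [sum_ite, sum_const_zero, add_zero, sum_const, nsmul_eq_mul, mul_comm, hfix]
  calc ∑ a : X, ∑ b : X, actionMatrix x a b ^ 2
      = ∑ a : X, ∑ g : G, ∑ h : G, ∑ b : X, (if g • a = b then x.coeff g else 0) *
          (if h • a = b then x.coeff h else 0) := by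
        refine sum_congr rfl fun a _ => ?_
        simp only [actionMatrix, sq, sum_mul_sum]
        rw [sum_comm]
        exact sum_congr rfl fun g _ => sum_comm
    _ = ∑ g : G, ∑ h : G, ∑ a : X, if g • a = h • a then x.coeff g * x.coeff h else 0 := by
        simp only [sum_b]
        rw [sum_comm]
        exact sum_congr rfl fun g _ => sum_comm
    _ = _ := by simp only [sum_a]

theorem isRightRegular_permCharacterElement [LinearOrder 𝕜] [IsStrictOrderedRing 𝕜] {a : X}
    (ha : Function.Injective fun g : G => g • a) :
    IsRightRegular (permCharacterElement 𝕜 G X) := by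
  classical
  refine isRightRegular_of_non_zero_divisor _ fun x hx => ?_
  have hsq : ∑ p : X × X, actionMatrix x p.1 p.2 * actionMatrix x p.1 p.2 = 0 := by
    rw [Fintype.sum_prod_type]
    simp only [← sq, sum_sq_actionMatrix, ← sum_coeff_mul_coeff_mul_permCharacterElement, hx,
      coeff_zero, Finsupp.coe_zero, Pi.zero_apply, mul_zero, sum_const_zero]
  have hzero := (sum_mul_self_eq_zero_iff _ _).mp hsq
  ext g
  simpa [actionMatrix_smul_of_injective x ha] using hzero (a, g • a) (mem_univ _)

theorem isUnit_permCharacterElement [LinearOrder 𝕜] [IsStrictOrderedRing 𝕜] {a : X}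
    (ha : Function.Injective fun g : G => g • a) :
    IsUnit (permCharacterElement 𝕜 G X) :=
  have := IsArtinianRing.of_finite 𝕜 (MonoidAlgebra 𝕜 G)
  IsArtinianRing.isUnit_iff_isRightRegular.mpr (isRightRegular_permCharacterElement ha)

end MonoidAlgebra

attribute [local instance] arrowAction

namespace Equiv.Perm

variable {α β : Type*}

theorem apply_eq_of_sameCycle [Finite α] {σ : Perm α} {f : α → β} (hf : f ∘ σ = f) {x y : α}
    (hxy : σ.SameCycle x y) : f x = f y := by
  obtain ⟨n, -, rfl⟩ := hxy.exists_pow_eq'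
  rw [coe_pow, ← Function.comp_apply (f := f), Function.iterate_invariant hf]

theorem smul_left_injective_of_injective {f : α → β} (hf : Function.Injective f) :
    Function.Injective fun σ : Perm α => σ • f :=
  fun _ _ h => inv_injective (Equiv.ext fun a => hf (congrFun h a))

variable [Fintype α] [DecidableEq α]

def extendAlongCycles (σ : Perm α) (p : (σ.cycleFactorsFinset → β) × ({x // x ∉ σ.support} → β))
    (x : α) : β :=
  if h : x ∈ σ.support then p.1 ⟨σ.cycleOf x, cycleOf_mem_cycleFactorsFinset_iff.mpr h⟩
  else p.2 ⟨x, h⟩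

theorem extendAlongCycles_comp (σ : Perm α)
    (p : (σ.cycleFactorsFinset → β) × ({x // x ∉ σ.support} → β)) :
    extendAlongCycles σ p ∘ σ = extendAlongCycles σ p := by
  funext x
  by_cases h : x ∈ σ.support
  · simp only [extendAlongCycles, Function.comp_apply, dif_pos h,
      dif_pos (apply_mem_support.mpr h), cycleOf_self_apply]
  · simp only [Function.comp_apply, notMem_support.mp h]

theorem extendAlongCycles_injective (σ : Perm α) :
    Function.Injective (extendAlongCycles (β := β) σ) := by
  intro p q hpq
  refine Prod.ext (funext fun c => ?_) (funext fun x => ?_)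
  · obtain ⟨x, hx⟩ := (mem_cycleFactorsFinset_iff.mp c.2).1.nonempty_support
    have hxσ : x ∈ σ.support := mem_cycleFactorsFinset_support_le c.2 hx
    have hc : (⟨σ.cycleOf x, cycleOf_mem_cycleFactorsFinset_iff.mpr hxσ⟩ :
        σ.cycleFactorsFinset) = c := Subtype.ext (cycle_is_cycleOf hx c.2).symm
    simpa only [extendAlongCycles, dif_pos hxσ, hc] using congrFun hpq x
  · simpa only [extendAlongCycles, dif_neg x.2] using congrFun hpq x

theorem exists_extendAlongCycles_eq {σ : Perm α} {f : α → β} (hf : f ∘ σ = f) :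
    ∃ p, extendAlongCycles σ p = f := by
  choose r hr using fun c : σ.cycleFactorsFinset =>
    (mem_cycleFactorsFinset_iff.mp c.2).1.nonempty_support
  refine ⟨(fun c => f (r c), fun x => f x), funext fun x => ?_⟩
  by_cases h : x ∈ σ.support
  · have hx := (mem_support_cycleOf_iff.mp
      (hr ⟨σ.cycleOf x, cycleOf_mem_cycleFactorsFinset_iff.mpr h⟩)).1
    simp only [extendAlongCycles, dif_pos h]
    exact (apply_eq_of_sameCycle hf hx).symm
  · simp only [extendAlongCycles, dif_neg h]

theorem card_comp_eq_self [Finite β] (σ : Perm α) :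
    Nat.card {f : α → β // f ∘ σ = f} =
      Nat.card β ^ (σ.cycleType.card + (Fintype.card α - #σ.support)) := by
  have e : (σ.cycleFactorsFinset → β) × ({x // x ∉ σ.support} → β) ≃
      {f : α → β // f ∘ σ = f} :=
    Equiv.ofBijective (fun p => ⟨extendAlongCycles σ p, extendAlongCycles_comp σ p⟩)
      ⟨fun p q hpq => extendAlongCycles_injective σ (congrArg Subtype.val hpq),
        fun f => (exists_extendAlongCycles_eq f.2).imp fun p hp => Subtype.ext hp⟩
  have hfix : Nat.card {x // x ∉ σ.support} = Fintype.card α - #σ.support := by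
    rw [Nat.card_eq_fintype_card, Fintype.card_subtype_compl, Fintype.card_coe]
  rw [← Nat.card_congr e, Nat.card_prod, Nat.card_fun, Nat.card_fun, ← pow_add, hfix,
    Nat.card_eq_fintype_card (α := σ.cycleFactorsFinset), Fintype.card_coe, cycleType,
    Multiset.card_map, card_val]

theorem card_fixedBy_arrowAction (k d : ℕ) (ρ : Perm (Fin k)) :
    Nat.card (fixedBy (Fin k → Fin d) ρ) = d ^ cycles ρ := by
  have h := card_comp_eq_self (β := Fin d) ρ⁻¹
  rwa [cycleType_inv, support_inv, Fintype.card_fin, Nat.card_eq_fintype_card (α := Fin d),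
    Fintype.card_fin] at h

end Equiv.Perm

theorem P_isUnit_general (k d : ℕ) (hd : k ≤ d) :
    IsUnit (∑ ρ : Equiv.Perm (Fin k),
      (d : ℚ) ^ cycles ρ • MonoidAlgebra.of ℚ (Equiv.Perm (Fin k)) ρ) := by
  have hP : ∑ ρ : Equiv.Perm (Fin k), (d : ℚ) ^ cycles ρ • MonoidAlgebra.of ℚ _ ρ =
      MonoidAlgebra.permCharacterElement ℚ (Equiv.Perm (Fin k)) (Fin k → Fin d) := by
    simp only [MonoidAlgebra.permCharacterElement, Equiv.Perm.card_fixedBy_arrowAction,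
      Nat.cast_pow]
  rw [hP]
  exact MonoidAlgebra.isUnit_permCharacterElement
    (Equiv.Perm.smul_left_injective_of_injective (Fin.castLE_injective hd))

/-- For `d ≥ k`, the element `P = ∑_{ρ ∈ S_k} d^{c(ρ)} ρ` is invertible in the
group algebra `ℚ[S_k]`. -/
theorem P_isUnit (k d : ℕ) (hd : k ≤ d) (hdpos : 0 < d) :
    IsUnit (∑ ρ : Equiv.Perm (Fin k),
      (d : ℚ) ^ cycles ρ • MonoidAlgebra.of ℚ (Equiv.Perm (Fin k)) ρ) :=
  P_isUnit_general k d hd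
end

section
/- Define on the vector space with basis {σ̃ : σ ∈ S_k} the product σ̃_1·σ̃_2 = (σ_1σ_2)~ if |σ_1σ_2| = |σ_1| + |σ_2|, and 0 otherwise, where |σ| = k - c(σ). This product is associative. -/
/-- The length `|σ| := k - c(σ)`. -/
def len {k : ℕ} (σ : Equiv.Perm (Fin k)) : ℕ := k - cycles σ

/-- The degenerate product on `ℚ[S̃_k]`: on basis elements,
`σ̃·τ̃ = (στ)~` if `|στ| = |σ| + |τ|` and `0` otherwise, extended
bilinearly. -/
noncomputable def tmul {k : ℕ} (x y : Equiv.Perm (Fin k) →₀ ℚ) :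
    Equiv.Perm (Fin k) →₀ ℚ :=
  Finsupp.sum x fun σ a => Finsupp.sum y fun τ b =>
    if len (σ * τ) = len σ + len τ then Finsupp.single (σ * τ) (a * b) else 0

/-!
Let `P_σ` act on functions `Fin k → ℚ` by `f ↦ f ∘ σ`. The kernel of `P_σ - 1` consists of the
functions constant on the cycles of `σ`, so it has dimension `c(σ)` and `|σ| = rank (P_σ - 1)`.
Since `P_{στ} - 1 = P_τ (P_σ - 1) + (P_τ - 1)`, the length is subadditive. Hence
`|σ₁σ₂σ₃| = |σ₁| + |σ₂| + |σ₃|` holds iff both `|σ₁σ₂| = |σ₁| + |σ₂|` and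
`|(σ₁σ₂)σ₃| = |σ₁σ₂| + |σ₃|` do, iff both `|σ₂σ₃| = |σ₂| + |σ₃|` and
`|σ₁(σ₂σ₃)| = |σ₁| + |σ₂σ₃|` do; so both bracketings of a product of three basis elements agree,
and associativity follows by bilinearity.
-/

open Equiv Equiv.Perm Module

namespace Equiv.Perm

variable {α : Type*} (K : Type*) [Field K]

noncomputable def funLeftSubId (σ : Perm α) : (α → K) →ₗ[K] (α → K) :=
  LinearMap.funLeft K K σ - LinearMap.id

theorem funLeftSubId_mul (σ τ : Perm α) :
    funLeftSubId K (σ * τ) =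
      LinearMap.funLeft K K τ ∘ₗ funLeftSubId K σ + funLeftSubId K τ := by
  ext f x
  simp [funLeftSubId, LinearMap.funLeft_apply]

theorem ker_funLeftSubId [Finite α] (σ : Perm α) :
    LinearMap.ker (funLeftSubId K σ) =
      LinearMap.range (LinearMap.funLeft K K (Quotient.mk (SameCycle.setoid σ))) := by
  ext f
  simp only [LinearMap.mem_ker, LinearMap.mem_range, funLeftSubId, LinearMap.sub_apply,
    sub_eq_zero, funext_iff, LinearMap.funLeft_apply, LinearMap.id_apply]
  constructor
  · intro hf
    refine ⟨Quotient.lift f fun x y hxy => ?_, fun _ => rfl⟩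
    obtain ⟨n, -, rfl⟩ := hxy.exists_pow_eq'
    rw [coe_pow]
    exact (congrFun (Function.iterate_invariant (funext hf) n) x).symm
  · rintro ⟨g, hg⟩ x
    rw [← hg, ← hg]
    exact congrArg g (Quotient.sound (sameCycle_apply_left.2 SameCycle.rfl))

theorem finrank_ker_funLeftSubId [Finite α] (σ : Perm α) :
    finrank K (LinearMap.ker (funLeftSubId K σ)) =
      Nat.card (Quotient (SameCycle.setoid σ)) := by
  have := Fintype.ofFinite (Quotient (SameCycle.setoid σ))
  rw [ker_funLeftSubId, LinearMap.finrank_range_of_inj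
    (LinearMap.funLeft_injective_of_surjective _ _ _ Quotient.mk_surjective),
    Module.finrank_fintype_fun_eq_card, Nat.card_eq_fintype_card]

variable {K} [Fintype α] [DecidableEq α]

noncomputable def orbitLabel (σ : Perm α) (x : α) :
    σ.cycleFactorsFinset ⊕ Function.fixedPoints σ :=
  if h : σ x = x then .inr ⟨x, h⟩
  else .inl ⟨σ.cycleOf x, cycleOf_mem_cycleFactorsFinset_iff.2 (mem_support.2 h)⟩

theorem orbitLabel_eq_iff {σ : Perm α} {x y : α} :
    σ.orbitLabel x = σ.orbitLabel y ↔ σ.SameCycle x y := by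
  by_cases hx : σ x = x <;> by_cases hy : σ y = y <;>
    simp [orbitLabel, hx, hy, Subtype.ext_iff]
  · exact ⟨fun h => h ▸ SameCycle.rfl, fun h => h.eq_of_left hx⟩
  · exact fun h => hy (h.apply_eq_self_iff.1 hx)
  · exact fun h => hx (h.apply_eq_self_iff.2 hy)
  · exact (sameCycle_iff_cycleOf_eq_of_mem_support (mem_support.2 hx) (mem_support.2 hy)).symm

theorem orbitLabel_surjective (σ : Perm α) : Function.Surjective σ.orbitLabel := by
  rintro (⟨c, hc⟩ | ⟨x, hx⟩)
  · obtain ⟨x, hx⟩ := (mem_cycleFactorsFinset_iff.1 hc).1.nonempty_support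
    have hσx : σ x ≠ x := mem_support.1 (mem_cycleFactorsFinset_support_le hc hx)
    exact ⟨x, by simp [orbitLabel, hσx, cycle_is_cycleOf hx hc]⟩
  · exact ⟨x, by simp [orbitLabel, hx.eq]⟩

theorem card_quotient_sameCycle (σ : Perm α) :
    Nat.card (Quotient (SameCycle.setoid σ)) =
      σ.cycleType.card + (Fintype.card α - σ.support.card) := by
  have hker : Setoid.ker σ.orbitLabel = SameCycle.setoid σ :=
    Setoid.ext fun _ _ => orbitLabel_eq_iff
  rw [← hker, Nat.card_congr (Setoid.quotientKerEquivOfSurjective _ σ.orbitLabel_surjective),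
    Nat.card_sum, Nat.card_eq_fintype_card, Nat.card_eq_fintype_card, card_fixedPoints,
    sum_cycleType, cycleType_def, Multiset.card_map]
  simp

end Equiv.Perm

section Length

variable {k : ℕ}

theorem cycles_eq_card_quotient_sameCycle (σ : Perm (Fin k)) :
    cycles σ = Nat.card (Quotient (SameCycle.setoid σ)) := by
  rw [card_quotient_sameCycle, Fintype.card_fin, cycles]

theorem len_eq_rank_funLeftSubId (K : Type*) [Field K] (σ : Perm (Fin k)) :
    (len σ : Cardinal) = (funLeftSubId K σ).rank := by
  have h := (funLeftSubId K σ).finrank_range_add_finrank_ker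
  rw [finrank_ker_funLeftSubId, ← cycles_eq_card_quotient_sameCycle,
    Module.finrank_fintype_fun_eq_card, Fintype.card_fin] at h
  rw [LinearMap.rank, ← Module.finrank_eq_rank, len, Nat.cast_inj]
  omega

theorem len_mul_le (σ τ : Perm (Fin k)) : len (σ * τ) ≤ len σ + len τ := by
  have h : (len (σ * τ) : Cardinal) ≤ len σ + len τ := calc
    (len (σ * τ) : Cardinal)
      = (LinearMap.funLeft ℚ ℚ τ ∘ₗ funLeftSubId ℚ σ + funLeftSubId ℚ τ).rank := by
        rw [len_eq_rank_funLeftSubId ℚ, funLeftSubId_mul]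
    _ ≤ (LinearMap.funLeft ℚ ℚ τ ∘ₗ funLeftSubId ℚ σ).rank + (funLeftSubId ℚ τ).rank :=
        LinearMap.rank_add_le _ _
    _ ≤ (funLeftSubId ℚ σ).rank + (funLeftSubId ℚ τ).rank := by
        gcongr
        exact LinearMap.rank_comp_le_right _ _
    _ = len σ + len τ := by rw [len_eq_rank_funLeftSubId ℚ, len_eq_rank_funLeftSubId ℚ]
  exact_mod_cast h

theorem len_mul_mul_eq_add_iff_left (σ τ ρ : Perm (Fin k)) :
    len (σ * τ * ρ) = len σ + len τ + len ρ ↔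
      len (σ * τ) = len σ + len τ ∧ len (σ * τ * ρ) = len (σ * τ) + len ρ := by
  have := len_mul_le σ τ
  have := len_mul_le (σ * τ) ρ
  omega

theorem len_mul_mul_eq_add_iff_right (σ τ ρ : Perm (Fin k)) :
    len (σ * τ * ρ) = len σ + len τ + len ρ ↔
      len (τ * ρ) = len τ + len ρ ∧ len (σ * (τ * ρ)) = len σ + len (τ * ρ) := by
  have := len_mul_le τ ρ
  have := len_mul_le σ (τ * ρ)
  rw [mul_assoc]
  omega

end Length

section Tmul

variable {k : ℕ}

theorem tmul_single_single (σ τ : Perm (Fin k)) (a b : ℚ) :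
    tmul (Finsupp.single σ a) (Finsupp.single τ b) =
      if len (σ * τ) = len σ + len τ then Finsupp.single (σ * τ) (a * b) else 0 := by
  simp [tmul]

theorem zero_tmul (y : Perm (Fin k) →₀ ℚ) : tmul 0 y = 0 := by
  simp [tmul]

theorem tmul_zero (x : Perm (Fin k) →₀ ℚ) : tmul x 0 = 0 := by
  simp [tmul]

theorem add_tmul (x x' y : Perm (Fin k) →₀ ℚ) : tmul (x + x') y = tmul x y + tmul x' y := by
  unfold tmul
  rw [Finsupp.sum_add_index (by simp)]
  intro σ _ a a'
  rw [← Finsupp.sum_add]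
  congr! 2 with τ b
  split <;> simp [add_mul]

theorem tmul_add (x y y' : Perm (Fin k) →₀ ℚ) : tmul x (y + y') = tmul x y + tmul x y' := by
  unfold tmul
  rw [← Finsupp.sum_add]
  congr 1
  funext σ a
  rw [Finsupp.sum_add_index (by simp)]
  intro τ _ b b'
  split <;> simp [mul_add]

theorem tmul_single_single_tmul_single (σ τ ρ : Perm (Fin k)) (a b c : ℚ) :
    tmul (tmul (Finsupp.single σ a) (Finsupp.single τ b)) (Finsupp.single ρ c) =
      if len (σ * τ * ρ) = len σ + len τ + len ρ then
        Finsupp.single (σ * τ * ρ) (a * b * c) else 0 := by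
  by_cases h : len (σ * τ) = len σ + len τ
  · rw [tmul_single_single, if_pos h, tmul_single_single, h]
  · rw [tmul_single_single, if_neg h, zero_tmul,
      if_neg fun h' => h ((len_mul_mul_eq_add_iff_left σ τ ρ).1 h').1]

theorem single_tmul_single_tmul_single (σ τ ρ : Perm (Fin k)) (a b c : ℚ) :
    tmul (Finsupp.single σ a) (tmul (Finsupp.single τ b) (Finsupp.single ρ c)) =
      if len (σ * τ * ρ) = len σ + len τ + len ρ then
        Finsupp.single (σ * τ * ρ) (a * b * c) else 0 := by
  by_cases h : len (τ * ρ) = len τ + len ρ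
  · rw [tmul_single_single τ, if_pos h, tmul_single_single, h]
    simp only [← mul_assoc, ← add_assoc]
  · rw [tmul_single_single τ, if_neg h, tmul_zero,
      if_neg fun h' => h ((len_mul_mul_eq_add_iff_right σ τ ρ).1 h').1]

end Tmul

/-- The degenerate product is associative. -/
theorem tmul_assoc {k : ℕ} (x y z : Equiv.Perm (Fin k) →₀ ℚ) :
    tmul (tmul x y) z = tmul x (tmul y z) := by
  induction x using Finsupp.induction_linear with
  | zero => simp only [zero_tmul]
  | add x x' hx hx' => simp only [add_tmul, hx, hx']
  | single σ a =>
    induction y using Finsupp.induction_linear with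
    | zero => simp only [zero_tmul, tmul_zero]
    | add y y' hy hy' => simp only [add_tmul, tmul_add, hy, hy']
    | single τ b =>
      induction z using Finsupp.induction_linear with
      | zero => simp only [tmul_zero]
      | add z z' hz hz' => simp only [tmul_add, hz, hz']
      | single ρ c => rw [tmul_single_single_tmul_single, single_tmul_single_tmul_single]
end
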